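/- A finite game is harmonic (i.e., ∑_{i} ∑_{β_i ∈ A_i} (u_i(β_i; α_{-i}) − u_i(α_i; α_{-i})) = 0 for all pure profiles α) if and only if it is incompressible, i.e., the Shahshahani divergence of its effective replicator field vanishes identically on the interior of the strategy space. -/

import Mathlib

open Finset

noncomputable section

/-- Full coordinates on the simplex from effective (corner-of-cube) coordinates:
`x_{i,0} = 1 − ∑_k x̃_{i,k}` and `x_{i,k.succ} = x̃_{i,k}`. -/
def fullCoord {ι : Type*} [Fintype ι] (m : ι → ℕ)
    (y : ∀ i, Fin (m i) → ℝ) : ∀ i, Fin (m i + 1) → ℝ :=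
  fun i => Fin.cons (1 - ∑ k, y i k) (y i)

/-- The multilinear mixed extension of player `i`'s payoff function. -/
def mixedPayoff {ι : Type*} [Fintype ι] [DecidableEq ι] (m : ι → ℕ)
    (u : ι → (∀ j, Fin (m j + 1)) → ℝ) (i : ι) (x : ∀ j, Fin (m j + 1) → ℝ) : ℝ :=
  ∑ α : ∀ j, Fin (m j + 1), u i α * ∏ j, x j (α j)

/-- The mixed payoff `u_i(a ; x_{-i})`. -/
def unilateralPayoff {ι : Type*} [Fintype ι] [DecidableEq ι] (m : ι → ℕ)
    (u : ι → (∀ j, Fin (m j + 1)) → ℝ) (i : ι) (a : Fin (m i + 1))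
    (x : ∀ j, Fin (m j + 1) → ℝ) : ℝ :=
  mixedPayoff m u i (Function.update x i (fun b => if b = a then 1 else 0))

/-- The effective payoff field `ṽ_{i,k}(x̃) = u_i(k;x_{-i}) − u_i(0_i;x_{-i})`. -/
def effField {ι : Type*} [Fintype ι] [DecidableEq ι] (m : ι → ℕ)
    (u : ι → (∀ j, Fin (m j + 1)) → ℝ) (i : ι) (k : Fin (m i))
    (y : ∀ j, Fin (m j) → ℝ) : ℝ :=
  unilateralPayoff m u i k.succ (fullCoord m y) -
    unilateralPayoff m u i 0 (fullCoord m y)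

/-- The effective replicator field
`X̃_{i,k}(x̃) = x̃_{i,k} (ṽ_{i,k}(x̃) − ∑_l x̃_{i,l} ṽ_{i,l}(x̃))`. -/
def effReplicator {ι : Type*} [Fintype ι] [DecidableEq ι] (m : ι → ℕ)
    (u : ι → (∀ j, Fin (m j + 1)) → ℝ) (i : ι) (k : Fin (m i))
    (y : ∀ j, Fin (m j) → ℝ) : ℝ :=
  y i k * (effField m u i k y - ∑ l, y i l * effField m u i l y)

/-- `√(det g̃_i)`, the square root of the determinant of the effective Shahshahani
metric of player `i`: `det g̃_i = 1 / (x_{i,0} ∏_k x̃_{i,k})`. -/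
def sqrtDet {ι : Type*} [Fintype ι] (m : ι → ℕ) (i : ι)
    (y : ∀ j, Fin (m j) → ℝ) : ℝ :=
  Real.sqrt (1 / ((1 - ∑ k, y i k) * ∏ k, y i k))

/-- The coordinate direction `(i, k)` in the effective strategy space. -/
def coordDir {ι : Type*} [Fintype ι] [DecidableEq ι] (m : ι → ℕ) (i : ι)
    (k : Fin (m i)) : ∀ j, Fin (m j) → ℝ :=
  Function.update (0 : ∀ j, Fin (m j) → ℝ) i (Pi.single k 1)

/-- The Shahshahani (Riemannian) divergence of the effective replicator field:
`div X̃ = ∑_i (det g̃_i)^{-1/2} ∑_k ∂_{x̃_{i,k}} ((det g̃_i)^{1/2} X̃_{i,k})`. -/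
def shahDiv {ι : Type*} [Fintype ι] [DecidableEq ι] (m : ι → ℕ)
    (u : ι → (∀ j, Fin (m j + 1)) → ℝ) (y : ∀ j, Fin (m j) → ℝ) : ℝ :=
  ∑ i, (sqrtDet m i y)⁻¹ *
    ∑ k, fderiv ℝ (fun z => sqrtDet m i z * effReplicator m u i k z) y (coordDir m i k)

/-!
Along the coordinate direction `e_{i,k}` only player `i`'s own coordinates move, and the payoff
differences `ṽ_{i,l}` do not depend on them. Each term of the divergence is therefore the
derivative of an explicit function of one variable, and summing gives
`div X̃ = ½ ∑_i (∑_b u_i(b; x_{-i}) − (m_i + 1) u_i(x))`. This is `½` times the multilinear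
extension of the harmonicity defect `∑_i ∑_b (u_i(b; α_{-i}) − u_i(α))`. The extension is
continuous and takes the value of the defect at the vertices of the closed strategy space, so it
vanishes on the interior iff the defect vanishes at every pure profile.
-/

lemma HasDerivAt.sqrt_one_div_mul {q r : ℝ → ℝ} {q' r' x : ℝ} (hq : HasDerivAt q q' x)
    (hr : HasDerivAt r r' x) (hqx : 0 < q x) :
    HasDerivAt (fun t => √(1 / q t) * r t) (√(1 / q x) * (r' - q' * r x / (2 * q x))) x := by
  have hs := ((hasDerivAt_const x (1 : ℝ)).fun_div hq hqx.ne').sqrt (by positivity)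
  refine (hs.mul hr).congr_deriv ?_
  have hs0 : 0 < √(1 / q x) := by positivity
  have hsq : √(1 / q x) ^ 2 * q x = 1 := by
    rw [Real.sq_sqrt (by positivity)]
    field_simp
  field_simp
  linear_combination (q' * r x) * hsq

lemma differentiable_update_const {𝕜 ι : Type*} [NontriviallyNormedField 𝕜] [Fintype ι]
    [DecidableEq ι] {E : ι → Type*} [∀ i, NormedAddCommGroup (E i)] [∀ i, NormedSpace 𝕜 (E i)]
    (i : ι) (w : E i) : Differentiable 𝕜 (fun x : ∀ j, E j => Function.update x i w) := by
  refine differentiable_pi.2 fun j => ?_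
  rcases eq_or_ne j i with rfl | hji
  · simp [differentiable_const]
  · simpa [Function.update_of_ne hji] using differentiable_apply j

lemma Finset.sum_filter_update_eq {ι : Type*} [Fintype ι] [DecidableEq ι] {A : ι → Type*}
    [∀ j, Fintype (A j)] [∀ j, DecidableEq (A j)] {M : Type*} [AddCommMonoid M]
    (i : ι) (b c : A i) (g : (∀ j, A j) → M) :
    ∑ α ∈ univ.filter (fun α => α i = c), g (Function.update α i b)
      = ∑ β ∈ univ.filter (fun β => β i = b), g β := by
  refine sum_nbij' (fun α => Function.update α i b) (fun β => Function.update β i c)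
    (by simp) (by simp) (fun α hα => ?_) (fun β hβ => ?_) (fun _ _ => rfl)
  · simp only [Function.update_idem, ← (mem_filter.1 hα).2, Function.update_eq_self]
  · simp only [Function.update_idem, ← (mem_filter.1 hβ).2, Function.update_eq_self]

section Coordinates

variable {ι : Type*} [Fintype ι] (m : ι → ℕ)

lemma differentiable_fullCoord : Differentiable ℝ (fullCoord m) := by
  unfold fullCoord
  fun_prop

lemma fullCoord_sum (y : ∀ j, Fin (m j) → ℝ) (i : ι) : ∑ b, fullCoord m y i b = 1 := by
  simp [fullCoord, Fin.sum_cons]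

lemma differentiableAt_sqrtDet {i : ι} {y : ∀ j, Fin (m j) → ℝ} (hpos : ∀ l, 0 < y i l)
    (hsum : ∑ l, y i l < 1) : DifferentiableAt ℝ (sqrtDet m i) y := by
  have : 0 < (1 - ∑ l, y i l) * ∏ l, y i l :=
    mul_pos (by linarith) (prod_pos fun l _ => hpos l)
  unfold sqrtDet
  fun_prop (disch := positivity)

def vertex (α : ∀ j, Fin (m j + 1)) : ∀ j, Fin (m j) → ℝ :=
  fun j k => (Pi.single (α j) 1 : Fin (m j + 1) → ℝ) k.succ

lemma fullCoord_vertex (α : ∀ j, Fin (m j + 1)) :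
    fullCoord m (vertex m α) = fun j => Pi.single (α j) (1 : ℝ) := by
  funext j b
  refine Fin.cases ?_ (fun k => rfl) b
  have h := Fin.sum_univ_succ (Pi.single (α j) 1 : Fin (m j + 1) → ℝ)
  rw [sum_pi_single', if_pos (mem_univ _)] at h
  change 1 - ∑ k : Fin (m j), (Pi.single (α j) 1 : Fin (m j + 1) → ℝ) k.succ = _
  linarith

lemma vertex_mem_closure (α : ∀ j, Fin (m j + 1)) :
    vertex m α ∈ closure {y : ∀ j, Fin (m j) → ℝ | (∀ i k, 0 < y i k) ∧ ∀ i, ∑ k, y i k < 1} := by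
  set v := vertex m α
  set c : ∀ j, Fin (m j) → ℝ := fun j _ => 1 / ((m j : ℝ) + 1)
  have hv0 (j : ι) (k : Fin (m j)) : 0 ≤ v j k := by
    simp only [v, vertex, Pi.single_apply]
    split_ifs <;> norm_num
  have hv1 (j : ι) : ∑ k, v j k ≤ 1 := by
    have h := congrFun (congrFun (fullCoord_vertex m α) j) 0
    simp only [fullCoord, Fin.cons_zero] at h
    have : (0 : ℝ) ≤ (Pi.single (α j) 1 : Fin (m j + 1) → ℝ) 0 := by
      simp only [Pi.single_apply]
      split_ifs <;> norm_num
    linarith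
  have hc (j : ι) : ∑ k, c j k < 1 := by
    simp only [c, sum_const, card_univ, Fintype.card_fin, nsmul_eq_mul]
    rw [mul_one_div, div_lt_one (by positivity)]
    linarith
  refine mem_closure_of_tendsto (f := fun t : ℝ => (1 - t) • v + t • c)
    (b := nhdsWithin 0 (Set.Ioi 0)) ?_ ?_
  · have hcont : Continuous fun t : ℝ => (1 - t) • v + t • c := by fun_prop
    simpa using (hcont.tendsto 0).mono_left nhdsWithin_le_nhds
  · filter_upwards [Ioo_mem_nhdsGT one_pos] with t ⟨ht0, ht1⟩
    refine ⟨fun i k => ?_, fun i => ?_⟩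
    · simp only [Pi.add_apply, Pi.smul_apply, smul_eq_mul]
      exact add_pos_of_nonneg_of_pos (mul_nonneg (by linarith) (hv0 i k))
        (mul_pos ht0 (by positivity))
    · simp only [Pi.add_apply, Pi.smul_apply, smul_eq_mul, sum_add_distrib, ← mul_sum]
      nlinarith [hv1 i, hc i]

variable [DecidableEq ι]

lemma fullCoord_update (y : ∀ j, Fin (m j) → ℝ) (i : ι) (w : Fin (m i) → ℝ) :
    fullCoord m (Function.update y i w) =
      Function.update (fullCoord m y) i (Fin.cons (1 - ∑ k, w k) w) :=
  funext fun j => Function.apply_update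
    (fun j (v : Fin (m j) → ℝ) => (Fin.cons (1 - ∑ k, v k) v : Fin (m j + 1) → ℝ)) y i w j

lemma add_smul_coordDir (y : ∀ j, Fin (m j) → ℝ) (i : ι) (k : Fin (m i)) (t : ℝ) :
    y + t • coordDir m i k = Function.update y i (y i + Pi.single k t) := by
  funext j l
  rcases eq_or_ne j i with rfl | hji
  · simp [coordDir, Pi.single_apply]
  · simp [coordDir, Function.update_of_ne hji]

end Coordinates

section MultilinearExtension

variable {ι : Type*} [Fintype ι] [DecidableEq ι] (m : ι → ℕ)

def multilinearExt (f : (∀ j, Fin (m j + 1)) → ℝ) (x : ∀ j, Fin (m j + 1) → ℝ) : ℝ :=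
  ∑ α, f α * ∏ j, x j (α j)

lemma multilinearExt_eq_sum_fiber (f : (∀ j, Fin (m j + 1)) → ℝ) (x : ∀ j, Fin (m j + 1) → ℝ)
    (i : ι) :
    multilinearExt m f x = ∑ c, x i c *
      ∑ α ∈ univ.filter (fun α => α i = c), f α * ∏ j ∈ univ.erase i, x j (α j) := by
  rw [multilinearExt, ← sum_fiberwise univ (fun α => α i)]
  refine sum_congr rfl fun c _ => ?_
  rw [mul_sum]
  refine sum_congr rfl fun α hα => ?_
  rw [← mul_prod_erase univ _ (mem_univ i), (mem_filter.1 hα).2]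
  ring

lemma multilinearExt_fullCoord_vertex (f : (∀ j, Fin (m j + 1)) → ℝ) (α : ∀ j, Fin (m j + 1)) :
    multilinearExt m f (fullCoord m (vertex m α)) = f α := by
  rw [multilinearExt, fullCoord_vertex, sum_eq_single α]
  · simp
  · intro β _ hβ
    obtain ⟨j, hj⟩ := Function.ne_iff.1 hβ
    rw [prod_eq_zero (mem_univ j) (by simp [hj]), mul_zero]
  · simp

lemma eq_zero_of_multilinearExt_fullCoord_eq_zero (f : (∀ j, Fin (m j + 1)) → ℝ)
    (h : ∀ y : ∀ j, Fin (m j) → ℝ, (∀ i k, 0 < y i k) → (∀ i, ∑ k, y i k < 1) →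
      multilinearExt m f (fullCoord m y) = 0)
    (α : ∀ j, Fin (m j + 1)) : f α = 0 := by
  have hcont : Continuous fun y => multilinearExt m f (fullCoord m y) := by
    have := (differentiable_fullCoord m).continuous
    unfold multilinearExt
    fun_prop
  have := (isClosed_eq hcont continuous_const).closure_subset_iff.2 (fun y hy => h y hy.1 hy.2)
    (vertex_mem_closure m α)
  rwa [← multilinearExt_fullCoord_vertex m f α]

end MultilinearExtension

section Payoffs

variable {ι : Type*} [Fintype ι] [DecidableEq ι] (m : ι → ℕ)
  (u : ι → (∀ j, Fin (m j + 1)) → ℝ) (i : ι)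

lemma differentiable_mixedPayoff : Differentiable ℝ (mixedPayoff m u i) := by
  unfold mixedPayoff
  fun_prop

lemma unilateralPayoff_update_self (a : Fin (m i + 1)) (x : ∀ j, Fin (m j + 1) → ℝ)
    (w : Fin (m i + 1) → ℝ) :
    unilateralPayoff m u i a (Function.update x i w) = unilateralPayoff m u i a x := by
  simp only [unilateralPayoff, Function.update_idem]

lemma unilateralPayoff_eq_sum_fiber (x : ∀ j, Fin (m j + 1) → ℝ) (b : Fin (m i + 1)) :
    unilateralPayoff m u i b x
      = ∑ α ∈ univ.filter (fun α => α i = b), u i α * ∏ j ∈ univ.erase i, x j (α j) := by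
  rw [unilateralPayoff, mixedPayoff, ← multilinearExt, multilinearExt_eq_sum_fiber m _ _ i]
  simp only [Function.update_self, ite_mul, one_mul, zero_mul, sum_ite_eq', mem_univ, if_true]
  refine sum_congr rfl fun α _ => congrArg _ (prod_congr rfl fun j hj => ?_)
  rw [Function.update_of_ne (ne_of_mem_erase hj)]

lemma mixedPayoff_eq_sum_mul_unilateralPayoff (x : ∀ j, Fin (m j + 1) → ℝ) :
    mixedPayoff m u i x = ∑ b, x i b * unilateralPayoff m u i b x := by
  rw [mixedPayoff, ← multilinearExt, multilinearExt_eq_sum_fiber m _ _ i]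
  simp_rw [unilateralPayoff_eq_sum_fiber]

lemma multilinearExt_update_eq_unilateralPayoff {x : ∀ j, Fin (m j + 1) → ℝ}
    (hx : ∑ c, x i c = 1) (b : Fin (m i + 1)) :
    multilinearExt m (fun α => u i (Function.update α i b)) x = unilateralPayoff m u i b x := by
  have hfiber (c : Fin (m i + 1)) :
      ∑ α ∈ univ.filter (fun α => α i = c),
          u i (Function.update α i b) * ∏ j ∈ univ.erase i, x j (α j)
        = unilateralPayoff m u i b x := by
    rw [unilateralPayoff_eq_sum_fiber,
      ← sum_filter_update_eq i b c fun β => u i β * ∏ j ∈ univ.erase i, x j (β j)]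
    refine sum_congr rfl fun α _ => congrArg _ (prod_congr rfl fun j hj => ?_)
    rw [Function.update_of_ne (ne_of_mem_erase hj)]
  rw [multilinearExt_eq_sum_fiber m _ _ i]
  simp_rw [hfiber, ← sum_mul, hx, one_mul]

lemma multilinearExt_sum_deviation {x : ∀ j, Fin (m j + 1) → ℝ} (hx : ∑ c, x i c = 1) :
    multilinearExt m (fun α => ∑ b : Fin (m i + 1), (u i (Function.update α i b) - u i α)) x
      = ∑ b, unilateralPayoff m u i b x - ((m i : ℝ) + 1) * mixedPayoff m u i x := by
  have hdev (b : Fin (m i + 1)) : ∑ α, u i (Function.update α i b) * ∏ j, x j (α j)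
      = unilateralPayoff m u i b x := multilinearExt_update_eq_unilateralPayoff m u i hx b
  have hmix : ∑ α, u i α * ∏ j, x j (α j) = mixedPayoff m u i x := rfl
  simp only [multilinearExt, sum_mul, sub_mul]
  rw [sum_comm]
  simp only [sum_sub_distrib, hdev, hmix, sum_const, card_univ, Fintype.card_fin, nsmul_eq_mul]
  push_cast
  ring

lemma effField_update_self (l : Fin (m i)) (y : ∀ j, Fin (m j) → ℝ) (w : Fin (m i) → ℝ) :
    effField m u i l (Function.update y i w) = effField m u i l y := by
  simp only [effField, fullCoord_update, unilateralPayoff_update_self]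

@[fun_prop]
lemma differentiable_effField (l : Fin (m i)) : Differentiable ℝ (effField m u i l) := by
  have h (a : Fin (m i + 1)) :
      Differentiable ℝ (fun y => unilateralPayoff m u i a (fullCoord m y)) :=
    (differentiable_mixedPayoff m u i).comp
      ((differentiable_update_const i _).comp (differentiable_fullCoord m) :)
  exact (h _).sub (h _)

lemma sum_effField_sub (y : ∀ j, Fin (m j) → ℝ) :
    ∑ k, effField m u i k y - ((m i : ℝ) + 1) * ∑ l, y i l * effField m u i l y
      = ∑ b, unilateralPayoff m u i b (fullCoord m y)
        - ((m i : ℝ) + 1) * mixedPayoff m u i (fullCoord m y) := by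
  simp only [effField, mixedPayoff_eq_sum_mul_unilateralPayoff m u i (fullCoord m y),
    Fin.sum_univ_succ, fullCoord, Fin.cons_zero, Fin.cons_succ, mul_sub, sum_sub_distrib,
    ← sum_mul, sum_const, card_univ, Fintype.card_fin, nsmul_eq_mul]
  ring

end Payoffs

section Divergence

variable {ι : Type*} [Fintype ι] [DecidableEq ι] (m : ι → ℕ)
  (u : ι → (∀ j, Fin (m j + 1)) → ℝ) {i : ι} {y : ∀ j, Fin (m j) → ℝ}

lemma sqrtDet_mul_effReplicator_add_smul_coordDir (k : Fin (m i)) (t : ℝ) :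
    sqrtDet m i (y + t • coordDir m i k) * effReplicator m u i k (y + t • coordDir m i k)
      = √(1 / ((1 - (∑ l, y i l + t)) * ((y i k + t) * ∏ l ∈ univ.erase k, y i l)))
        * ((y i k + t) * (effField m u i k y
            - (∑ l, y i l * effField m u i l y + t * effField m u i k y))) := by
  have hS : ∑ l, (y i + Pi.single k t : Fin (m i) → ℝ) l = ∑ l, y i l + t := by
    simp [sum_add_distrib]
  have hP : ∏ l, (y i + Pi.single k t : Fin (m i) → ℝ) l
      = (y i k + t) * ∏ l ∈ univ.erase k, y i l := by
    rw [← mul_prod_erase _ _ (mem_univ k)]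
    refine congrArg₂ _ (by simp) (prod_congr rfl fun l hl => ?_)
    simp [Pi.single_eq_of_ne (ne_of_mem_erase hl)]
  have hW : ∑ l, (y i + Pi.single k t : Fin (m i) → ℝ) l * effField m u i l y
      = ∑ l, y i l * effField m u i l y + t * effField m u i k y := by
    simp [add_mul, sum_add_distrib, Pi.single_apply]
  simp only [add_smul_coordDir, sqrtDet, effReplicator, effField_update_self,
    Function.update_self, hS, hP, hW]
  simp

lemma hasLineDerivAt_sqrtDet_mul_effReplicator (hpos : ∀ l, 0 < y i l)
    (hsum : ∑ l, y i l < 1) (k : Fin (m i)) :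
    HasLineDerivAt ℝ (fun z => sqrtDet m i z * effReplicator m u i k z)
      (sqrtDet m i y *
        ((effField m u i k y - ∑ l, y i l * effField m u i l y) / 2
          + y i k * (effField m u i k y - ∑ l, y i l * effField m u i l y)
              / (2 * (1 - ∑ l, y i l))
          - y i k * effField m u i k y))
      y (coordDir m i k) := by
  unfold HasLineDerivAt
  simp only [sqrtDet_mul_effReplicator_add_smul_coordDir]
  set S := ∑ l, y i l
  set P := ∏ l ∈ univ.erase k, y i l
  set c := effField m u i k y
  set W := ∑ l, y i l * effField m u i l y
  have hP : 0 < P := prod_pos fun l _ => hpos l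
  have hq : HasDerivAt (fun t => (1 - (S + t)) * ((y i k + t) * P))
      (-(y i k * P) + (1 - S) * P) 0 := by
    refine ((((hasDerivAt_id' (0 : ℝ)).const_add S).const_sub 1).mul
      (((hasDerivAt_id' (0 : ℝ)).const_add (y i k)).mul_const P)).congr_deriv ?_
    ring
  have hr : HasDerivAt (fun t => (y i k + t) * (c - (W + t * c))) (c - W - y i k * c) 0 := by
    refine (((hasDerivAt_id' (0 : ℝ)).const_add (y i k)).mul
      ((((hasDerivAt_id' (0 : ℝ)).mul_const c).const_add W).const_sub c)).congr_deriv ?_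
    ring
  have hS : 0 < 1 - S := by linarith
  have hk := hpos k
  have hdet : sqrtDet m i y = √(1 / ((1 - (S + 0)) * ((y i k + 0) * P))) := by
    rw [sqrtDet, ← mul_prod_erase univ (y i) (mem_univ k), add_zero, add_zero]
  refine (hq.sqrt_one_div_mul hr ?_).congr_deriv ?_
  · simp only [add_zero]
    exact mul_pos hS (mul_pos hk hP)
  rw [hdet]
  congr 1
  simp only [add_zero]
  field_simp
  ring

lemma fderiv_sqrtDet_mul_effReplicator (hpos : ∀ l, 0 < y i l) (hsum : ∑ l, y i l < 1)
    (k : Fin (m i)) :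
    fderiv ℝ (fun z => sqrtDet m i z * effReplicator m u i k z) y (coordDir m i k)
      = sqrtDet m i y *
        ((effField m u i k y - ∑ l, y i l * effField m u i l y) / 2
          + y i k * (effField m u i k y - ∑ l, y i l * effField m u i l y)
              / (2 * (1 - ∑ l, y i l))
          - y i k * effField m u i k y) := by
  have hdiff : DifferentiableAt ℝ (fun z => sqrtDet m i z * effReplicator m u i k z) y :=
    (differentiableAt_sqrtDet m hpos hsum).mul (by unfold effReplicator; fun_prop)
  exact (hdiff.hasFDerivAt.hasLineDerivAt _).unique
    (hasLineDerivAt_sqrtDet_mul_effReplicator m u hpos hsum k)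

lemma sqrtDet_inv_mul_sum_fderiv (hpos : ∀ l, 0 < y i l) (hsum : ∑ l, y i l < 1) :
    (sqrtDet m i y)⁻¹ *
        ∑ k, fderiv ℝ (fun z => sqrtDet m i z * effReplicator m u i k z) y (coordDir m i k)
      = 1 / 2 * (∑ k, effField m u i k y
          - ((m i : ℝ) + 1) * ∑ l, y i l * effField m u i l y) := by
  have hdet : sqrtDet m i y ≠ 0 := by
    refine (Real.sqrt_pos.2 (one_div_pos.2 (mul_pos (by linarith) ?_))).ne'
    exact prod_pos fun l _ => hpos l
  have hS : 1 - ∑ l, y i l ≠ 0 := by linarith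
  simp_rw [fderiv_sqrtDet_mul_effReplicator m u hpos hsum, ← mul_sum,
    inv_mul_cancel_left₀ hdet]
  set W := ∑ l, y i l * effField m u i l y
  have hW : ∑ k, y i k * (effField m u i k y - W) = W - (∑ l, y i l) * W := by
    simp only [mul_sub, sum_sub_distrib, ← sum_mul, W]
  rw [sum_sub_distrib, sum_add_distrib, ← sum_div, ← sum_div, hW, sum_sub_distrib]
  simp only [sum_const, card_univ, Fintype.card_fin, nsmul_eq_mul]
  field_simp
  ring

def deviationSum (α : ∀ j, Fin (m j + 1)) : ℝ :=
  ∑ i, ∑ b : Fin (m i + 1), (u i (Function.update α i b) - u i α)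

lemma shahDiv_eq_half_multilinearExt_deviationSum (hpos : ∀ i k, 0 < y i k)
    (hsum : ∀ i, ∑ k, y i k < 1) :
    shahDiv m u y = 1 / 2 * multilinearExt m (deviationSum m u) (fullCoord m y) := by
  have hsplit : multilinearExt m (deviationSum m u) (fullCoord m y) = ∑ i, multilinearExt m
      (fun α => ∑ b : Fin (m i + 1), (u i (Function.update α i b) - u i α)) (fullCoord m y) := by
    simp only [multilinearExt, deviationSum, sum_mul]
    exact sum_comm
  rw [shahDiv, hsplit, mul_sum]
  refine sum_congr rfl fun i _ => ?_
  rw [sqrtDet_inv_mul_sum_fderiv m u (hpos i) (hsum i), sum_effField_sub,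
    multilinearExt_sum_deviation m u i (fullCoord_sum m y i)]

end Divergence

/-- **A finite game is harmonic iff it is incompressible**: the harmonicity condition
`∑_i ∑_{β_i} (u_i(β_i;α_{-i}) − u_i(α_i;α_{-i})) = 0` holds at every pure profile `α`
iff the Shahshahani divergence of the effective replicator field vanishes identically
on the interior of the strategy space. -/
theorem harmonic_iff_incompressible
    {ι : Type*} [Fintype ι] [DecidableEq ι] (m : ι → ℕ)
    (u : ι → (∀ j, Fin (m j + 1)) → ℝ) :
    (∀ α : ∀ j, Fin (m j + 1),
        ∑ i, ∑ b : Fin (m i + 1), (u i (Function.update α i b) - u i α) = 0)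
    ↔ (∀ y : ∀ j, Fin (m j) → ℝ,
        (∀ i k, 0 < y i k) → (∀ i, ∑ k, y i k < 1) → shahDiv m u y = 0) := by
  constructor
  · intro hharm y hpos hsum
    rw [shahDiv_eq_half_multilinearExt_deviationSum m u hpos hsum,
      show deviationSum m u = 0 from funext hharm]
    simp [multilinearExt]
  · intro hdiv
    refine eq_zero_of_multilinearExt_fullCoord_eq_zero m (deviationSum m u) fun y hpos hsum => ?_
    have h := shahDiv_eq_half_multilinearExt_deviationSum m u hpos hsum
    rw [hdiv y hpos hsum] at h
    linarith

end
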